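/- Let a, b > 0, N a positive integer, and define g(ρ) = (1/π)∫₀^{π/2} [sin⁴θ/((sin²θ + ρa)(sin²θ + ρb))]^N dθ. Then ρ^{2N}·g(ρ) → (ab)^{−N}·(1/(2π))·B(1/2, 2N + 1/2) as ρ → ∞. -/
import Mathlib

/-- Beta function `B(x, y) = Γ(x)Γ(y)/Γ(x+y)`. -/
noncomputable def Beta (x y : ℝ) : ℝ := Real.Gamma x * Real.Gamma y / Real.Gamma (x + y)

open Real Filter intervalIntegral

lemma sin_pow_integral (n : ℕ) :
    ∫ θ in (0:ℝ)..(Real.pi/2), Real.sin θ ^ (2*n) = Beta (1/2) (n + 1/2) / 2 := by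
  induction n with
  | zero =>
      simp only [Nat.mul_zero, pow_zero, Nat.cast_zero, zero_add, integral_one]
      unfold Beta
      rw [show (1:ℝ)/2 + 1/2 = 1 by norm_num, Real.Gamma_one, Real.Gamma_one_half_eq,
        Real.mul_self_sqrt Real.pi_pos.le]
      norm_num
  | succ n ih =>
      rw [Nat.mul_succ, integral_sin_pow]
      simp only [Real.sin_zero, Real.cos_pi_div_two, mul_zero, zero_pow (Nat.succ_ne_zero (2*n)),
        zero_mul, sub_zero, zero_div, zero_add]
      rw [ih]
      have hx : (0:ℝ) < (n:ℝ) + 1/2 := by positivity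
      have h1 : Real.Gamma ((n:ℝ) + 1/2 + 1) = ((n:ℝ)+1/2) * Real.Gamma ((n:ℝ)+1/2) :=
        Real.Gamma_add_one (ne_of_gt hx)
      have h2 : Real.Gamma ((n:ℝ) + 1 + 1) = ((n:ℝ)+1) * Real.Gamma ((n:ℝ)+1) :=
        Real.Gamma_add_one (by positivity)
      have h3 : Real.Gamma ((n:ℝ)+1) ≠ 0 := ne_of_gt (Real.Gamma_pos_of_pos (by positivity))
      unfold Beta
      push_cast
      rw [show (1:ℝ)/2 + ((n:ℝ) + 1 + 1/2) = (n:ℝ) + 1 + 1 by ring,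
        show (1:ℝ)/2 + ((n:ℝ) + 1/2) = (n:ℝ) + 1 by ring,
        show (n:ℝ) + 1 + 1/2 = (n:ℝ) + 1/2 + 1 by ring, h1, h2]
      field_simp

theorem stmt_17 (a b : ℝ) (ha : 0 < a) (hb : 0 < b) (N : ℕ) (hN : 0 < N) :
    Filter.Tendsto (fun ρ : ℝ => ρ ^ (2 * N) *
        ((1 / Real.pi) * ∫ θ in (0 : ℝ)..(Real.pi / 2),
          (Real.sin θ ^ 4 / ((Real.sin θ ^ 2 + ρ * a) * (Real.sin θ ^ 2 + ρ * b))) ^ N))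
      Filter.atTop
      (nhds ((a * b)⁻¹ ^ N * (1 / (2 * Real.pi)) * Beta (1 / 2) (2 * N + 1 / 2))) := by
  have hab : (0:ℝ) < a * b := mul_pos ha hb
  have key : Tendsto (fun ρ : ℝ => ∫ θ in (0:ℝ)..(Real.pi/2),
      ρ ^ (2*N) * (Real.sin θ ^ 4 / ((Real.sin θ ^ 2 + ρ*a) * (Real.sin θ ^ 2 + ρ*b))) ^ N)
      atTop (nhds (∫ θ in (0:ℝ)..(Real.pi/2), (Real.sin θ ^ 4 / (a*b)) ^ N)) := by
    apply intervalIntegral.tendsto_integral_filter_of_dominated_convergence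
      (fun _ => (a*b)⁻¹ ^ N)
    · filter_upwards [eventually_ge_atTop (1:ℝ)] with ρ hρ
      have hρ0 : (0:ℝ) < ρ := lt_of_lt_of_le one_pos hρ
      apply Continuous.aestronglyMeasurable
      apply Continuous.mul continuous_const
      apply Continuous.pow
      apply Continuous.div (by continuity) (by continuity)
      intro θ
      have h1 : 0 < Real.sin θ ^ 2 + ρ*a := by positivity
      have h2 : 0 < Real.sin θ ^ 2 + ρ*b := by positivity
      positivity
    · filter_upwards [eventually_ge_atTop (1:ℝ)] with ρ hρ
      have hρ0 : (0:ℝ) < ρ := lt_of_lt_of_le one_pos hρ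
      apply MeasureTheory.ae_of_all
      intro θ _
      have hs0 : (0:ℝ) ≤ Real.sin θ ^ 2 := sq_nonneg _
      have hs4 : Real.sin θ ^ 4 ≤ 1 := by
        nlinarith [Real.sin_sq_le_one θ, sq_nonneg (Real.sin θ)]
      have h1 : 0 < Real.sin θ ^ 2 + ρ*a := by positivity
      have h2 : 0 < Real.sin θ ^ 2 + ρ*b := by positivity
      have hfrac : Real.sin θ ^ 4 / ((Real.sin θ ^ 2 + ρ*a) * (Real.sin θ ^ 2 + ρ*b))
          ≤ 1 / ((ρ*a) * (ρ*b)) := by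
        apply div_le_div₀ one_pos.le hs4 (by positivity)
        nlinarith [mul_nonneg hs0 (mul_pos hρ0 ha).le, mul_nonneg hs0 (mul_pos hρ0 hb).le]
      rw [Real.norm_eq_abs, abs_of_nonneg (by positivity)]
      calc ρ ^ (2*N) * (Real.sin θ ^ 4 / ((Real.sin θ ^ 2 + ρ*a) * (Real.sin θ ^ 2 + ρ*b))) ^ N
          ≤ ρ ^ (2*N) * (1 / ((ρ*a) * (ρ*b))) ^ N := by
            apply mul_le_mul_of_nonneg_left _ (by positivity)
            exact pow_le_pow_left₀ (by positivity) hfrac N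
        _ = (a*b)⁻¹ ^ N := by
            rw [pow_mul, ← mul_pow]
            congr 1
            field_simp
    · exact intervalIntegrable_const
    · apply MeasureTheory.ae_of_all
      intro θ _
      have hlim : Tendsto (fun ρ : ℝ =>
          (Real.sin θ ^ 4 / ((Real.sin θ ^ 2 / ρ + a) * (Real.sin θ ^ 2 / ρ + b))) ^ N)
          atTop (nhds ((Real.sin θ ^ 4 / (a*b)) ^ N)) := by
        have hd : Tendsto (fun ρ : ℝ => (Real.sin θ ^ 2 / ρ + a) * (Real.sin θ ^ 2 / ρ + b))
            atTop (nhds (a*b)) := by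
          have h0 : Tendsto (fun ρ : ℝ => Real.sin θ ^ 2 / ρ) atTop (nhds 0) :=
            tendsto_const_nhds.div_atTop tendsto_id
          have hA := h0.add (tendsto_const_nhds : Tendsto (fun _:ℝ => a) atTop (nhds a))
          have hB := h0.add (tendsto_const_nhds : Tendsto (fun _:ℝ => b) atTop (nhds b))
          simpa using hA.mul hB
        exact (Tendsto.div tendsto_const_nhds hd (ne_of_gt hab)).pow N
      apply hlim.congr'
      filter_upwards [eventually_gt_atTop (0:ℝ)] with ρ hρ
      have h1 : 0 < Real.sin θ ^ 2 + ρ*a := by positivity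
      have h2 : 0 < Real.sin θ ^ 2 + ρ*b := by positivity
      rw [pow_mul, ← mul_pow]
      congr 1
      field_simp
  have heq : (fun ρ : ℝ => ρ ^ (2 * N) *
        ((1 / Real.pi) * ∫ θ in (0 : ℝ)..(Real.pi / 2),
          (Real.sin θ ^ 4 / ((Real.sin θ ^ 2 + ρ * a) * (Real.sin θ ^ 2 + ρ * b))) ^ N))
      = fun ρ : ℝ => (1 / Real.pi) * ∫ θ in (0:ℝ)..(Real.pi/2),
          ρ ^ (2*N) * (Real.sin θ ^ 4 / ((Real.sin θ ^ 2 + ρ*a) * (Real.sin θ ^ 2 + ρ*b))) ^ N := by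
    funext ρ
    rw [intervalIntegral.integral_const_mul]
    ring
  have hint : ∫ θ in (0:ℝ)..(Real.pi/2), (Real.sin θ ^ 4 / (a*b)) ^ N
      = Beta (1/2) (2*(N:ℝ) + 1/2) / 2 / (a*b)^N := by
    simp_rw [div_pow, ← pow_mul]
    rw [intervalIntegral.integral_div, show 4*N = 2*(2*N) by ring, sin_pow_integral (2*N)]
    push_cast
    ring_nf
  have hval : (a * b)⁻¹ ^ N * (1 / (2 * Real.pi)) * Beta (1/2) (2*(N:ℝ) + 1/2)
      = (1 / Real.pi) * (Beta (1/2) (2*(N:ℝ) + 1/2) / 2 / (a*b)^N) := by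
    have hπ : Real.pi ≠ 0 := ne_of_gt Real.pi_pos
    have habN : (a*b)^N ≠ 0 := pow_ne_zero _ (ne_of_gt hab)
    rw [inv_pow]
    ring
  rw [heq, hval]
  rw [hint] at key
  exact key.const_mul (1 / Real.pi)
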